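/- Let L be a pseudo-Finsler metric on a conic domain A over Ω ⊆ ℝⁿ, let V be an L-admissible smooth vector field on Ω, let Γ be a torsion-free connection datum almost g-compatible with reference V, with connection ∇ and curvature tensor R^V. Then for all smooth vector fields X, Y, Z, W on Ω and all x ∈ Ω: g_V(R^V(X,Y)Z, W) − g_V(R^V(Z,W)X, Y) = B^V(Z,Y,X,W) + B^V(X,Z,Y,W) + B^V(W,X,Z,Y) + B^V(Y,W,Z,X) + B^V(W,Z,X,Y) + B^V(X,Y,Z,W), where g_V(·,·)(x) := g_{(x,V(x))}(·,·). -/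

import Mathlib

noncomputable section

open scoped Topology

/-- Vectors in `ℝⁿ`. -/
abbrev Vec (n : ℕ) := Fin n → ℝ

/-- Continuous bilinear maps `ℝⁿ × ℝⁿ → ℝⁿ` (as iterated continuous linear maps). -/
abbrev Bil (n : ℕ) := Vec n →L[ℝ] Vec n →L[ℝ] Vec n

/-- The fundamental tensor of `L`:
`g_{(x,v)}(u,w) = ½ ∂²/∂t∂s L(x, v + t u + s w)|₀`. -/
def gF {n : ℕ} (L : Vec n × Vec n → ℝ) (x v u w : Vec n) : ℝ :=
  (1 / 2) * deriv (fun t : ℝ => deriv (fun s : ℝ => L (x, v + t • u + s • w)) 0) 0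

/-- The Cartan tensor of `L`:
`C_{(x,v)}(w₁,w₂,w₃) = ¼ ∂³/∂s₁∂s₂∂s₃ L(x, v + s₁w₁ + s₂w₂ + s₃w₃)|₀`. -/
def CartanF {n : ℕ} (L : Vec n × Vec n → ℝ) (x v w₁ w₂ w₃ : Vec n) : ℝ :=
  (1 / 4) * deriv (fun s₁ : ℝ => deriv (fun s₂ : ℝ => deriv (fun s₃ : ℝ =>
    L (x, v + s₁ • w₁ + s₂ • w₂ + s₃ • w₃)) 0) 0) 0

/-- `L` is a pseudo-Finsler metric on the conic domain `A ⊆ Ω × (ℝⁿ \ {0})`. -/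
structure IsPseudoFinsler {n : ℕ} (Ω : Set (Vec n)) (A : Set (Vec n × Vec n))
    (L : Vec n × Vec n → ℝ) : Prop where
  isOpen_base : IsOpen Ω
  isOpen_dom : IsOpen A
  dom_subset : ∀ p ∈ A, p.1 ∈ Ω ∧ p.2 ≠ 0
  conic : ∀ p ∈ A, ∀ lam : ℝ, 0 < lam → (p.1, lam • p.2) ∈ A
  smooth : ContDiffOn ℝ (⊤ : ℕ∞) L A
  homogeneous : ∀ p ∈ A, ∀ lam : ℝ, 0 < lam → L (p.1, lam • p.2) = lam ^ 2 * L p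
  g_symm : ∀ p ∈ A, ∀ u w, gF L p.1 p.2 u w = gF L p.1 p.2 w u
  g_add_left : ∀ p ∈ A, ∀ u₁ u₂ w,
    gF L p.1 p.2 (u₁ + u₂) w = gF L p.1 p.2 u₁ w + gF L p.1 p.2 u₂ w
  g_smul_left : ∀ p ∈ A, ∀ (c : ℝ) u w, gF L p.1 p.2 (c • u) w = c * gF L p.1 p.2 u w
  g_nondeg : ∀ p ∈ A, ∀ u, (∀ w, gF L p.1 p.2 u w = 0) → u = 0

/-- The affine connection associated to a connection datum `Γ`:
`(∇_X Y)(x) = (dY)_x(X(x)) + Γ(x)(X(x), Y(x))`. -/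
def nablaVF {n : ℕ} (Γ : Vec n → Bil n) (X Y : Vec n → Vec n) (x : Vec n) : Vec n :=
  fderiv ℝ Y x (X x) + Γ x (X x) (Y x)

/-- A connection datum is torsion-free on `Ω` if its values are symmetric bilinear maps. -/
def TorsionFree {n : ℕ} (Ω : Set (Vec n)) (Γ : Vec n → Bil n) : Prop :=
  ∀ x ∈ Ω, ∀ u w, Γ x u w = Γ x w u

/-- A vector field `V` on `Ω` is `L`-admissible if it is smooth and takes values in `A`. -/
def LAdmissible {n : ℕ} (A : Set (Vec n × Vec n)) (Ω : Set (Vec n))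
    (V : Vec n → Vec n) : Prop :=
  ContDiffOn ℝ (⊤ : ℕ∞) V Ω ∧ ∀ x ∈ Ω, (x, V x) ∈ A

/-- A connection datum `Γ` on `Ω` is almost `g`-compatible with reference `V`:
`X(g_V(Y,Z)) = g_V(∇_X Y, Z) + g_V(Y, ∇_X Z) + 2 C_V(∇_X V, Y, Z)`. -/
def AlmostGCompatible {n : ℕ} (L : Vec n × Vec n → ℝ) (Ω : Set (Vec n))
    (Γ : Vec n → Bil n) (V : Vec n → Vec n) : Prop :=
  ∀ X Y Z : Vec n → Vec n,
    ContDiffOn ℝ (⊤ : ℕ∞) X Ω → ContDiffOn ℝ (⊤ : ℕ∞) Y Ω → ContDiffOn ℝ (⊤ : ℕ∞) Z Ω →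
    ∀ x ∈ Ω,
      fderiv ℝ (fun y => gF L y (V y) (Y y) (Z y)) x (X x) =
        gF L x (V x) (nablaVF Γ X Y x) (Z x) + gF L x (V x) (Y x) (nablaVF Γ X Z x)
          + 2 * CartanF L x (V x) (nablaVF Γ X V x) (Y x) (Z x)

/-- Lie bracket of vector fields: `[X,Y](x) = (dY)_x(X(x)) − (dX)_x(Y(x))`. -/
def lieVF {n : ℕ} (X Y : Vec n → Vec n) (x : Vec n) : Vec n :=
  fderiv ℝ Y x (X x) - fderiv ℝ X x (Y x)

/-- Curvature tensor of a connection datum: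
`R(X,Y)Z = ∇_X∇_Y Z − ∇_Y∇_X Z − ∇_{[X,Y]}Z`. -/
def curvVF {n : ℕ} (Γ : Vec n → Bil n) (X Y Z : Vec n → Vec n) (x : Vec n) : Vec n :=
  nablaVF Γ X (nablaVF Γ Y Z) x - nablaVF Γ Y (nablaVF Γ X Z) x
    - nablaVF Γ (lieVF X Y) Z x

/-- Covariant derivative of the Cartan tensor:
`(∇^V_X C_V)(Y,Z,W)(x)`. -/
def nablaCartan {n : ℕ} (L : Vec n × Vec n → ℝ) (Γ : Vec n → Bil n)
    (V X Y Z W : Vec n → Vec n) (x : Vec n) : ℝ :=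
  fderiv ℝ (fun y => CartanF L y (V y) (Y y) (Z y) (W y)) x (X x)
    - CartanF L x (V x) (nablaVF Γ X Y x) (Z x) (W x)
    - CartanF L x (V x) (Y x) (nablaVF Γ X Z x) (W x)
    - CartanF L x (V x) (Y x) (Z x) (nablaVF Γ X W x)

/-- The tensor
`B^V(X,Y,Z,W) = (∇^V_Y C_V)(∇_X V, Z, W) − (∇^V_X C_V)(∇_Y V, Z, W) + C_V(R^V(Y,X)V, Z, W)`. -/
def BTensor {n : ℕ} (L : Vec n × Vec n → ℝ) (Γ : Vec n → Bil n)
    (V X Y Z W : Vec n → Vec n) (x : Vec n) : ℝ :=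
  nablaCartan L Γ V Y (nablaVF Γ X V) Z W x - nablaCartan L Γ V X (nablaVF Γ Y V) Z W x
    + CartanF L x (V x) (curvVF Γ Y X V x) (Z x) (W x)

/-- A Chern connection of `(L, A)`: a smooth family of symmetric bilinear maps on `A` which,
for every open `U` and every `L`-admissible smooth vector field `V` on `U`, yields a
torsion-free, almost `g`-compatible connection datum `x ↦ Γ(x, V(x))`. -/
def IsChernConnection {n : ℕ} (L : Vec n × Vec n → ℝ) (A : Set (Vec n × Vec n))
    (Γc : Vec n × Vec n → Bil n) : Prop :=
  ContDiffOn ℝ (⊤ : ℕ∞) Γc A ∧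
  (∀ p ∈ A, ∀ u w, Γc p u w = Γc p w u) ∧
  ∀ U : Set (Vec n), IsOpen U → ∀ V : Vec n → Vec n, ContDiffOn ℝ (⊤ : ℕ∞) V U →
    (∀ x ∈ U, (x, V x) ∈ A) →
    AlmostGCompatible L U (fun x => Γc (x, V x)) V

/-- Covariant derivative along a curve `γ` with reference `W`:
`(D^W_γ X)(t) = X'(t) + Γ(γ(t), W(t))(γ'(t), X(t))`. -/
def covDer {n : ℕ} (Γc : Vec n × Vec n → Bil n) (γ W X : ℝ → Vec n) (t : ℝ) : Vec n :=
  deriv X t + Γc (γ t, W t) (deriv γ t) (X t)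

/-- Contracted hh-curvature `R_{(p,v)}(v,u)w` of the Chern connection. -/
def hhCurv {n : ℕ} (Γc : Vec n × Vec n → Bil n) (p v u w : Vec n) : Vec n :=
  fderiv ℝ Γc (p, v) (u, 0) v w - fderiv ℝ Γc (p, v) (w, 0) v u
    - fderiv ℝ Γc (p, v) (0, Γc (p, v) v u) v w
    + fderiv ℝ Γc (p, v) (0, Γc (p, v) v w) v u
    + Γc (p, v) u (Γc (p, v) v w) - Γc (p, v) w (Γc (p, v) v u)

/-- Covariant derivative along the `t`-parameter curves of a two-parameter map `Λ`,
with reference vector `∂Λ/∂t`. -/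
def DtOp {n : ℕ} (Γc : Vec n × Vec n → Bil n) (Λ X : ℝ × ℝ → Vec n) (p : ℝ × ℝ) : Vec n :=
  deriv (fun t => X (t, p.2)) p.1
    + Γc (Λ p, deriv (fun t => Λ (t, p.2)) p.1) (deriv (fun t => Λ (t, p.2)) p.1) (X p)

/-- Covariant derivative along the `s`-parameter curves of a two-parameter map `Λ`,
with reference vector `∂Λ/∂t`. -/
def DsOp {n : ℕ} (Γc : Vec n × Vec n → Bil n) (Λ X : ℝ × ℝ → Vec n) (p : ℝ × ℝ) : Vec n :=
  deriv (fun s => X (p.1, s)) p.2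
    + Γc (Λ p, deriv (fun t => Λ (t, p.2)) p.1) (deriv (fun s => Λ (p.1, s)) p.2) (X p)

section Helpers
variable {E F : Type*} [NormedAddCommGroup E] [NormedSpace ℝ E]
  [NormedAddCommGroup F] [NormedSpace ℝ F]

lemma hasDerivAt_line (q d : E) (t : ℝ) : HasDerivAt (fun s : ℝ => q + s • d) d t := by
  simpa using ((hasDerivAt_id t).smul_const d).const_add q

lemma deriv_along (ψ : E → F) {q : E} (d : E) (h : DifferentiableAt ℝ ψ q) :
    deriv (fun t : ℝ => ψ (q + t • d)) 0 = fderiv ℝ ψ q d := by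
  have h0 : HasFDerivAt ψ (fderiv ℝ ψ q) (q + (0:ℝ) • d) := by
    have e : q + (0:ℝ) • d = q := by simp
    rw [e]; exact h.hasFDerivAt
  exact (h0.comp_hasDerivAt 0 (hasDerivAt_line q d 0)).deriv

end Helpers

section Calculus

variable {n : ℕ} {Ω : Set (Vec n)} {A : Set (Vec n × Vec n)} {L : Vec n × Vec n → ℝ}

/-- second and third full derivatives of `L` -/
def D2 {n : ℕ} (L : Vec n × Vec n → ℝ) := fderiv ℝ (fderiv ℝ L)
def D3 {n : ℕ} (L : Vec n × Vec n → ℝ) := fderiv ℝ (D2 L)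

instance instNACG2 (n : ℕ) : NormedAddCommGroup (Vec n × Vec n →L[ℝ] Vec n × Vec n →L[ℝ] ℝ) :=
  inferInstance
instance instNS2 (n : ℕ) : NormedSpace ℝ (Vec n × Vec n →L[ℝ] Vec n × Vec n →L[ℝ] ℝ) :=
  inferInstance

lemma IsPseudoFinsler.contDiffAt (hL : IsPseudoFinsler Ω A L) {p : Vec n × Vec n}
    (hp : p ∈ A) : ContDiffAt ℝ (⊤ : ℕ∞) L p :=
  hL.smooth.contDiffAt (hL.isOpen_dom.mem_nhds hp)

lemma IsPseudoFinsler.diff2 (hL : IsPseudoFinsler Ω A L) {p : Vec n × Vec n}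
    (hp : p ∈ A) : DifferentiableAt ℝ (fderiv ℝ L) p :=
  ((hL.contDiffAt hp).fderiv_right (by simp)).differentiableAt (n := (⊤ : ℕ∞)) (by simp)

lemma IsPseudoFinsler.diff3 (hL : IsPseudoFinsler Ω A L) {p : Vec n × Vec n}
    (hp : p ∈ A) : DifferentiableAt ℝ (D2 L) p :=
  (((hL.contDiffAt hp).fderiv_right (m := ((⊤ : ℕ∞) : WithTop ℕ∞)) (by simp)).fderiv_right (m := ((⊤ : ℕ∞) : WithTop ℕ∞)) (by simp)).differentiableAt (n := (⊤ : ℕ∞)) (by simp)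

lemma mem_A_eventually (hA : IsOpen A) {p : Vec n × Vec n} (hp : p ∈ A)
    (d : Vec n × Vec n) : ∀ᶠ t : ℝ in 𝓝 0, p + t • d ∈ A := by
  have hcont : Continuous (fun t : ℝ => p + t • d) := by continuity
  have h0 : p + (0:ℝ) • d = p := by simp
  have := hcont.continuousAt (x := (0:ℝ))
  have hmem : A ∈ 𝓝 (p + (0:ℝ) • d) := by rw [h0]; exact hA.mem_nhds hp
  exact this hmem

/-- derivative of `fun q => fderiv ℝ L q z` -/
lemma fderiv_psi2 (hL : IsPseudoFinsler Ω A L) {p : Vec n × Vec n} (hp : p ∈ A)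
    (z d : Vec n × Vec n) :
    fderiv ℝ (fun q => fderiv ℝ L q z) p d = D2 L p d z := by
  rw [fderiv_clm_apply (hL.diff2 hp) (differentiableAt_const z)]
  simp [D2]

lemma diff_psi2 (hL : IsPseudoFinsler Ω A L) {p : Vec n × Vec n} (hp : p ∈ A)
    (z : Vec n × Vec n) : DifferentiableAt ℝ (fun q => fderiv ℝ L q z) p :=
  (hL.diff2 hp).clm_apply (differentiableAt_const z)

lemma fderiv_psi3 (hL : IsPseudoFinsler Ω A L) {p : Vec n × Vec n} (hp : p ∈ A)
    (y z d : Vec n × Vec n) :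
    fderiv ℝ (fun q => D2 L q y z) p d = D3 L p d y z := by
  have h1 : DifferentiableAt ℝ (fun q => D2 L q y) p :=
    (hL.diff3 hp).clm_apply (differentiableAt_const y)
  rw [fderiv_clm_apply h1 (differentiableAt_const z)]
  have h2 : fderiv ℝ (fun q => D2 L q y) p = (fderiv ℝ (D2 L) p).flip y := by
    rw [fderiv_clm_apply (hL.diff3 hp) (differentiableAt_const y), fderiv_const_apply]
    simp
  rw [h2]; simp [D3]

lemma diff_psi3 (hL : IsPseudoFinsler Ω A L) {p : Vec n × Vec n} (hp : p ∈ A)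
    (y z : Vec n × Vec n) : DifferentiableAt ℝ (fun q => D2 L q y z) p :=
  ((hL.diff3 hp).clm_apply (differentiableAt_const y)).clm_apply (differentiableAt_const z)

lemma gF_eq_D2 (hL : IsPseudoFinsler Ω A L) {p : Vec n × Vec n} (hp : p ∈ A) (u w : Vec n) :
    gF L p.1 p.2 u w = (1/2) * D2 L p ((0:Vec n), u) ((0:Vec n), w) := by
  obtain ⟨x, v⟩ := p
  have hev : (fun t : ℝ => deriv (fun s : ℝ => L (x, v + t • u + s • w)) 0) =ᶠ[𝓝 (0:ℝ)]
      (fun t : ℝ => fderiv ℝ L ((x,v) + t • ((0:Vec n),u)) ((0:Vec n),w)) := by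
    filter_upwards [mem_A_eventually hL.isOpen_dom hp ((0:Vec n), u)] with t ht
    have heq : (fun s : ℝ => L (x, v + t • u + s • w))
        = fun s : ℝ => L (((x,v) + t • ((0:Vec n),u)) + s • ((0:Vec n), w)) := by
      funext s
      congr 1
      simp [Prod.ext_iff]
    rw [heq, deriv_along L _ (((hL.contDiffAt ht)).differentiableAt (n := (⊤ : ℕ∞)) (by simp))]
  rw [gF, hev.deriv_eq]
  have heq2 : (fun t : ℝ => fderiv ℝ L ((x,v) + t • ((0:Vec n),u)) ((0:Vec n),w))
      = fun t : ℝ => (fun q => fderiv ℝ L q ((0:Vec n), w)) ((x,v) + t • ((0:Vec n),u)) := rfl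
  rw [heq2, deriv_along _ _ (diff_psi2 hL hp _), fderiv_psi2 hL hp]

lemma CartanF_eq_D3 (hL : IsPseudoFinsler Ω A L) {p : Vec n × Vec n} (hp : p ∈ A)
    (w₁ w₂ w₃ : Vec n) :
    CartanF L p.1 p.2 w₁ w₂ w₃
      = (1/4) * D3 L p ((0:Vec n), w₁) ((0:Vec n), w₂) ((0:Vec n), w₃) := by
  obtain ⟨x, v⟩ := p
  have hA := hL.isOpen_dom
  -- innermost rewriting valid at any q ∈ A
  have lvl1 : ∀ q ∈ A, ∀ (v' : Vec n), q = (x, v') →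
      deriv (fun s₃ : ℝ => L (q + s₃ • ((0:Vec n), w₃))) 0 = fderiv ℝ L q ((0:Vec n), w₃) :=
    fun q hq _ _ => deriv_along L _ ((hL.contDiffAt hq).differentiableAt (n := (⊤ : ℕ∞)) (by simp))
  -- middle level
  have lvl2 : ∀ q ∈ A,
      deriv (fun s₂ : ℝ => deriv (fun s₃ : ℝ => L (q + s₂ • ((0:Vec n), w₂) + s₃ • ((0:Vec n), w₃))) 0) 0
        = D2 L q ((0:Vec n), w₂) ((0:Vec n), w₃) := by
    intro q hq
    have hev : (fun s₂ : ℝ => deriv (fun s₃ : ℝ => L (q + s₂ • ((0:Vec n), w₂) + s₃ • ((0:Vec n), w₃))) 0)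
        =ᶠ[𝓝 (0:ℝ)] fun s₂ : ℝ => fderiv ℝ L (q + s₂ • ((0:Vec n), w₂)) ((0:Vec n), w₃) := by
      filter_upwards [mem_A_eventually hA hq ((0:Vec n), w₂)] with s₂ hs₂
      exact deriv_along L _ ((hL.contDiffAt hs₂).differentiableAt (n := (⊤ : ℕ∞)) (by simp))
    rw [hev.deriv_eq]
    rw [deriv_along (fun q' => fderiv ℝ L q' ((0:Vec n), w₃)) _ (diff_psi2 hL hq _),
      fderiv_psi2 hL hq]
  -- outer level
  have hev : (fun s₁ : ℝ => deriv (fun s₂ : ℝ => deriv (fun s₃ : ℝ =>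
      L (x, v + s₁ • w₁ + s₂ • w₂ + s₃ • w₃)) 0) 0)
      =ᶠ[𝓝 (0:ℝ)] fun s₁ : ℝ =>
        D2 L ((x,v) + s₁ • ((0:Vec n), w₁)) ((0:Vec n), w₂) ((0:Vec n), w₃) := by
    filter_upwards [mem_A_eventually hA hp ((0:Vec n), w₁)] with s₁ hs₁
    have heq : (fun s₂ : ℝ => deriv (fun s₃ : ℝ => L (x, v + s₁ • w₁ + s₂ • w₂ + s₃ • w₃)) 0)
        = fun s₂ : ℝ => deriv (fun s₃ : ℝ =>
            L ((((x,v) + s₁ • ((0:Vec n), w₁)) + s₂ • ((0:Vec n), w₂)) + s₃ • ((0:Vec n), w₃))) 0 := by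
      funext s₂
      congr 1
      funext s₃
      congr 1
      simp [Prod.ext_iff]
    rw [heq]
    exact lvl2 _ hs₁
  rw [CartanF, hev.deriv_eq]
  rw [deriv_along (fun q => D2 L q ((0:Vec n), w₂) ((0:Vec n), w₃)) _ (diff_psi3 hL hp _ _),
    fderiv_psi3 hL hp]

end Calculus

section Symmetry

variable {n : ℕ} {Ω : Set (Vec n)} {A : Set (Vec n × Vec n)} {L : Vec n × Vec n → ℝ}

lemma D2_symm (hL : IsPseudoFinsler Ω A L) {p : Vec n × Vec n} (hp : p ∈ A)
    (y z : Vec n × Vec n) : D2 L p y z = D2 L p z y :=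
  ((hL.contDiffAt hp).isSymmSndFDerivAt (by rw [minSmoothness_of_isRCLikeNormedField]; exact WithTop.coe_le_coe.mpr le_top)) y z

lemma D3_symm12 (hL : IsPseudoFinsler Ω A L) {p : Vec n × Vec n} (hp : p ∈ A)
    (a b z : Vec n × Vec n) : D3 L p a b z = D3 L p b a z := by
  have h := (((hL.contDiffAt hp).fderiv_right (m := ((⊤ : ℕ∞) : WithTop ℕ∞)) (by simp)).isSymmSndFDerivAt (by rw [minSmoothness_of_isRCLikeNormedField]; exact WithTop.coe_le_coe.mpr le_top)) a b
  exact congrFun (congrArg _ h) z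

lemma D3_symm23 (hL : IsPseudoFinsler Ω A L) {p : Vec n × Vec n} (hp : p ∈ A)
    (a y z : Vec n × Vec n) : D3 L p a y z = D3 L p a z y := by
  have hev : (fun q => D2 L q y z) =ᶠ[𝓝 p] (fun q => D2 L q z y) := by
    filter_upwards [hL.isOpen_dom.mem_nhds hp] with q hq using D2_symm hL hq y z
  have h1 := fderiv_psi3 hL hp y z a
  have h2 := fderiv_psi3 hL hp z y a
  rw [← h1, ← h2, hev.fderiv_eq]

lemma CartanF_symm12 (hL : IsPseudoFinsler Ω A L) {p : Vec n × Vec n} (hp : p ∈ A)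
    (a b c : Vec n) : CartanF L p.1 p.2 a b c = CartanF L p.1 p.2 b a c := by
  rw [CartanF_eq_D3 hL hp, CartanF_eq_D3 hL hp, D3_symm12 hL hp]

lemma CartanF_symm23 (hL : IsPseudoFinsler Ω A L) {p : Vec n × Vec n} (hp : p ∈ A)
    (a b c : Vec n) : CartanF L p.1 p.2 a b c = CartanF L p.1 p.2 a c b := by
  rw [CartanF_eq_D3 hL hp, CartanF_eq_D3 hL hp, D3_symm23 hL hp]

end Symmetry

section Euler

variable {n : ℕ} {Ω : Set (Vec n)} {A : Set (Vec n × Vec n)} {L : Vec n × Vec n → ℝ}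

/-- scaling map in the second variable -/
def Tmap (n : ℕ) (lam : ℝ) : (Vec n × Vec n) →L[ℝ] (Vec n × Vec n) :=
  (ContinuousLinearMap.fst ℝ (Vec n) (Vec n)).prod
    (lam • ContinuousLinearMap.snd ℝ (Vec n) (Vec n))

@[simp] lemma Tmap_apply (lam : ℝ) (q : Vec n × Vec n) :
    Tmap n lam q = (q.1, lam • q.2) := rfl

lemma euler_step1 (hL : IsPseudoFinsler Ω A L) {lam : ℝ} (hlam : 0 < lam)
    {q : Vec n × Vec n} (hq : q ∈ A) (z : Vec n × Vec n) :
    fderiv ℝ L (Tmap n lam q) (Tmap n lam z) = lam ^ 2 * fderiv ℝ L q z := by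
  have hev : (fun r => L (Tmap n lam r)) =ᶠ[𝓝 q] (fun r => lam ^ 2 * L r) := by
    filter_upwards [hL.isOpen_dom.mem_nhds hq] with r hr
    simpa using hL.homogeneous r hr lam hlam
  have hTq : Tmap n lam q ∈ A := by simpa using hL.conic q hq lam hlam
  have hdiff : DifferentiableAt ℝ L (Tmap n lam q) := (hL.contDiffAt hTq).differentiableAt (n := (⊤ : ℕ∞)) (by simp)
  have hcomp : fderiv ℝ (fun r => L (Tmap n lam r)) q
      = (fderiv ℝ L (Tmap n lam q)).comp (Tmap n lam) := by
    have := fderiv_comp (𝕜 := ℝ) q hdiff (Tmap n lam).differentiableAt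
    rw [show (L ∘ (Tmap n lam)) = fun r => L (Tmap n lam r) from rfl] at this
    rw [this, (Tmap n lam).fderiv]
  have hmul : fderiv ℝ (fun r => lam ^ 2 * L r) q
      = lam ^ 2 • fderiv ℝ L q := by
    exact (((hL.contDiffAt hq).differentiableAt (n := (⊤ : ℕ∞)) (by simp)).hasFDerivAt.const_mul (lam ^ 2)).fderiv
  have this : fderiv ℝ (fun r => L (Tmap n lam r)) q = fderiv ℝ (fun r => lam ^ 2 * L r) q :=
    hev.fderiv_eq
  rw [hcomp, hmul] at this
  calc fderiv ℝ L (Tmap n lam q) (Tmap n lam z)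
      = ((fderiv ℝ L (Tmap n lam q)).comp (Tmap n lam)) z := rfl
    _ = (lam ^ 2 • fderiv ℝ L q) z := by rw [this]
    _ = lam ^ 2 * fderiv ℝ L q z := rfl

lemma euler_step2 (hL : IsPseudoFinsler Ω A L) {lam : ℝ} (hlam : 0 < lam)
    {p : Vec n × Vec n} (hp : p ∈ A) (z d : Vec n × Vec n) :
    D2 L (Tmap n lam p) (Tmap n lam d) (Tmap n lam z) = lam ^ 2 * D2 L p d z := by
  have hTp : Tmap n lam p ∈ A := by simpa using hL.conic p hp lam hlam
  have hev : (fun q => fderiv ℝ L (Tmap n lam q) (Tmap n lam z)) =ᶠ[𝓝 p]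
      (fun q => lam ^ 2 * fderiv ℝ L q z) := by
    filter_upwards [hL.isOpen_dom.mem_nhds hp] with q hq using euler_step1 hL hlam hq z
  have hfd1 : fderiv ℝ (fun q => fderiv ℝ L (Tmap n lam q) (Tmap n lam z)) p d
      = D2 L (Tmap n lam p) (Tmap n lam d) (Tmap n lam z) := by
    have hcomp : fderiv ℝ ((fun r => fderiv ℝ L r (Tmap n lam z)) ∘ (Tmap n lam)) p
        = (fderiv ℝ (fun r => fderiv ℝ L r (Tmap n lam z)) (Tmap n lam p)).comp (Tmap n lam) :=
      by rw [fderiv_comp (𝕜 := ℝ) p (diff_psi2 hL hTp _) (Tmap n lam).differentiableAt,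
        (Tmap n lam).fderiv]
    have : fderiv ℝ (fun q => fderiv ℝ L (Tmap n lam q) (Tmap n lam z)) p d
        = fderiv ℝ (fun r => fderiv ℝ L r (Tmap n lam z)) (Tmap n lam p) (Tmap n lam d) := by
      rw [show (fun q => fderiv ℝ L (Tmap n lam q) (Tmap n lam z))
        = ((fun r => fderiv ℝ L r (Tmap n lam z)) ∘ (Tmap n lam)) from rfl, hcomp]; rfl
    rw [this, fderiv_psi2 hL hTp]
  have hfd2 : fderiv ℝ (fun q => lam ^ 2 * fderiv ℝ L q z) p d
      = lam ^ 2 * D2 L p d z := by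
    rw [((diff_psi2 hL hp z).hasFDerivAt.const_mul (lam ^ 2)).fderiv]
    have : (lam ^ 2 • fderiv ℝ (fun q => fderiv ℝ L q z) p) d
        = lam ^ 2 * fderiv ℝ (fun q => fderiv ℝ L q z) p d := rfl
    rw [this, fderiv_psi2 hL hp]
  rw [← hfd1, ← hfd2, hev.fderiv_eq]

lemma euler_D2_const (hL : IsPseudoFinsler Ω A L) {lam : ℝ} (hlam : 0 < lam)
    {p : Vec n × Vec n} (hp : p ∈ A) (w z : Vec n) :
    D2 L (p.1, lam • p.2) ((0:Vec n), w) ((0:Vec n), z) = D2 L p ((0:Vec n), w) ((0:Vec n), z) := by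
  have h := euler_step2 hL hlam hp ((0:Vec n), z) ((0:Vec n), w)
  have h1 : Tmap n lam ((0:Vec n), w) = lam • ((0:Vec n), w) := by
    simp [Prod.ext_iff]
  have h2 : Tmap n lam ((0:Vec n), z) = lam • ((0:Vec n), z) := by
    simp [Prod.ext_iff]
  have h3 : Tmap n lam p = (p.1, lam • p.2) := rfl
  rw [h1, h2, h3] at h
  rw [(D2 L (p.1, lam • p.2)).map_smul] at h
  simp only [ContinuousLinearMap.smul_apply, ContinuousLinearMap.map_smul] at h
  have hl2 : lam ^ 2 ≠ 0 := pow_ne_zero 2 (ne_of_gt hlam)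
  simp only [smul_eq_mul] at h
  have : lam ^ 2 * D2 L (p.1, lam • p.2) ((0:Vec n), w) ((0:Vec n), z)
      = lam ^ 2 * D2 L p ((0:Vec n), w) ((0:Vec n), z) := by
    rw [← h]; ring
  exact mul_left_cancel₀ hl2 this

lemma euler_D3 (hL : IsPseudoFinsler Ω A L) {p : Vec n × Vec n} (hp : p ∈ A) (w z : Vec n) :
    D3 L p ((0:Vec n), p.2) ((0:Vec n), w) ((0:Vec n), z) = 0 := by
  obtain ⟨x, v⟩ := p
  set ψ : Vec n × Vec n → ℝ := fun q => D2 L q ((0:Vec n), w) ((0:Vec n), z) with hψ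
  have hc : HasDerivAt (fun lam : ℝ => ψ ((x, v) + (lam - 1) • ((0:Vec n), v)))
      (fderiv ℝ ψ (x, v) ((0:Vec n), v)) 1 := by
    have hline : HasDerivAt (fun lam : ℝ => (x, v) + (lam - 1) • ((0:Vec n), v))
        ((0:Vec n), v) 1 := by
      simpa using (((hasDerivAt_id (1:ℝ)).sub_const 1).smul_const ((0:Vec n), v)).const_add (x, v)
    have h0 : HasFDerivAt ψ (fderiv ℝ ψ (x, v)) ((x, v) + ((1:ℝ) - 1) • ((0:Vec n), v)) := by
      have e : (x, v) + ((1:ℝ) - 1) • ((0:Vec n), v) = (x, v) := by simp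
      rw [e]
      exact (diff_psi3 hL hp _ _).hasFDerivAt
    exact h0.comp_hasDerivAt 1 hline
  have hev : (fun lam : ℝ => ψ ((x, v) + (lam - 1) • ((0:Vec n), v))) =ᶠ[𝓝 (1:ℝ)]
      (fun _ => ψ (x, v)) := by
    filter_upwards [eventually_gt_nhds (show (0:ℝ) < 1 by norm_num)] with lam hlam
    have harg : (x, v) + (lam - 1) • ((0:Vec n), v) = (x, lam • v) := by
      simp [Prod.ext_iff, sub_smul]
    rw [harg]
    exact euler_D2_const hL hlam hp w z
  have hconst : HasDerivAt (fun lam : ℝ => ψ ((x, v) + (lam - 1) • ((0:Vec n), v))) 0 1 := by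
    rw [Filter.EventuallyEq.hasDerivAt_iff hev]
    exact hasDerivAt_const 1 _
  have huniq := hc.unique hconst
  rw [← fderiv_psi3 hL hp ((0:Vec n), w) ((0:Vec n), z) ((0:Vec n), v)] at *
  exact huniq

lemma CartanF_euler1 (hL : IsPseudoFinsler Ω A L) {p : Vec n × Vec n} (hp : p ∈ A)
    (w z : Vec n) : CartanF L p.1 p.2 p.2 w z = 0 := by
  rw [CartanF_eq_D3 hL hp, euler_D3 hL hp w z, mul_zero]

lemma CartanF_euler2 (hL : IsPseudoFinsler Ω A L) {p : Vec n × Vec n} (hp : p ∈ A)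
    (w z : Vec n) : CartanF L p.1 p.2 w p.2 z = 0 := by
  rw [CartanF_symm12 hL hp]; exact CartanF_euler1 hL hp w z

lemma CartanF_euler3 (hL : IsPseudoFinsler Ω A L) {p : Vec n × Vec n} (hp : p ∈ A)
    (w z : Vec n) : CartanF L p.1 p.2 w z p.2 = 0 := by
  rw [CartanF_symm23 hL hp]; exact CartanF_euler2 hL hp w z

end Euler

section Linearity

variable {n : ℕ} {Ω : Set (Vec n)} {A : Set (Vec n × Vec n)} {L : Vec n × Vec n → ℝ}

lemma pair_zero_add (u w : Vec n) :
    ((0:Vec n), u + w) = ((0:Vec n), u) + ((0:Vec n), w) := by simp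

lemma pair_zero_sub (u w : Vec n) :
    ((0:Vec n), u - w) = ((0:Vec n), u) - ((0:Vec n), w) := by simp

lemma pair_zero_smul (c : ℝ) (u : Vec n) :
    ((0:Vec n), c • u) = c • ((0:Vec n), u) := by simp

lemma gF_add_right (hL : IsPseudoFinsler Ω A L) {p : Vec n × Vec n} (hp : p ∈ A)
    (a u w : Vec n) : gF L p.1 p.2 a (u + w) = gF L p.1 p.2 a u + gF L p.1 p.2 a w := by
  rw [gF_eq_D2 hL hp, gF_eq_D2 hL hp, gF_eq_D2 hL hp, pair_zero_add]
  rw [(D2 L p ((0:Vec n), a)).map_add]; ring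

lemma gF_sub_right (hL : IsPseudoFinsler Ω A L) {p : Vec n × Vec n} (hp : p ∈ A)
    (a u w : Vec n) : gF L p.1 p.2 a (u - w) = gF L p.1 p.2 a u - gF L p.1 p.2 a w := by
  rw [gF_eq_D2 hL hp, gF_eq_D2 hL hp, gF_eq_D2 hL hp, pair_zero_sub]
  rw [(D2 L p ((0:Vec n), a)).map_sub]; ring

lemma gF_smul_right (hL : IsPseudoFinsler Ω A L) {p : Vec n × Vec n} (hp : p ∈ A)
    (a : Vec n) (c : ℝ) (u : Vec n) :
    gF L p.1 p.2 a (c • u) = c * gF L p.1 p.2 a u := by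
  rw [gF_eq_D2 hL hp, gF_eq_D2 hL hp, pair_zero_smul]
  rw [(D2 L p ((0:Vec n), a)).map_smul]
  simp [smul_eq_mul]; ring

lemma gF_sub_left (hL : IsPseudoFinsler Ω A L) {p : Vec n × Vec n} (hp : p ∈ A)
    (u w a : Vec n) : gF L p.1 p.2 (u - w) a = gF L p.1 p.2 u a - gF L p.1 p.2 w a := by
  rw [gF_eq_D2 hL hp, gF_eq_D2 hL hp, gF_eq_D2 hL hp, pair_zero_sub]
  rw [(D2 L p).map_sub]
  simp [ContinuousLinearMap.sub_apply]; ring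

lemma gF_sum_right (hL : IsPseudoFinsler Ω A L) {p : Vec n × Vec n} (hp : p ∈ A)
    (a : Vec n) {ι : Type*} (s : Finset ι) (f : ι → Vec n) :
    gF L p.1 p.2 a (∑ i ∈ s, f i) = ∑ i ∈ s, gF L p.1 p.2 a (f i) := by
  classical
  induction s using Finset.induction_on with
  | empty =>
      simp only [Finset.sum_empty]
      have h0 : gF L p.1 p.2 a 0 = 0 := by
        have := gF_sub_right hL hp a 0 0
        simpa using this
      exact h0
  | insert _ _ hni ih =>
      rw [Finset.sum_insert hni, Finset.sum_insert hni, gF_add_right hL hp, ih]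

lemma CartanF_sub1 (hL : IsPseudoFinsler Ω A L) {p : Vec n × Vec n} (hp : p ∈ A)
    (a b u w : Vec n) : CartanF L p.1 p.2 (a - b) u w
      = CartanF L p.1 p.2 a u w - CartanF L p.1 p.2 b u w := by
  rw [CartanF_eq_D3 hL hp, CartanF_eq_D3 hL hp, CartanF_eq_D3 hL hp, pair_zero_sub,
    (D3 L p).map_sub]
  simp [ContinuousLinearMap.sub_apply]; ring

lemma CartanF_neg1 (hL : IsPseudoFinsler Ω A L) {p : Vec n × Vec n} (hp : p ∈ A)
    (a u w : Vec n) : CartanF L p.1 p.2 (-a) u w = - CartanF L p.1 p.2 a u w := by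
  have := CartanF_sub1 hL hp 0 a u w
  have h0 : CartanF L p.1 p.2 0 u w = 0 := by
    have h := CartanF_sub1 hL hp 0 0 u w
    simpa using h
  rw [zero_sub] at this; rw [this, h0, zero_sub]

end Linearity

section Smoothness

variable {n : ℕ} {Ω : Set (Vec n)} {A : Set (Vec n × Vec n)} {L : Vec n × Vec n → ℝ}
variable {V : Vec n → Vec n}

lemma hD2On (hL : IsPseudoFinsler Ω A L) : ContDiffOn ℝ (⊤ : ℕ∞) (D2 L) A :=
  (hL.smooth.fderiv_of_isOpen (m := ((⊤ : ℕ∞) : WithTop ℕ∞)) hL.isOpen_dom (by simp)).fderiv_of_isOpen (m := ((⊤ : ℕ∞) : WithTop ℕ∞)) hL.isOpen_dom (by simp)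

lemma hD3On (hL : IsPseudoFinsler Ω A L) : ContDiffOn ℝ (⊤ : ℕ∞) (D3 L) A :=
  (hD2On hL).fderiv_of_isOpen hL.isOpen_dom (by simp)

lemma gV_contDiffOn (hL : IsPseudoFinsler Ω A L) (hV : LAdmissible A Ω V)
    {P Q : Vec n → Vec n} (hP : ContDiffOn ℝ (⊤ : ℕ∞) P Ω) (hQ : ContDiffOn ℝ (⊤ : ℕ∞) Q Ω) :
    ContDiffOn ℝ (⊤ : ℕ∞) (fun y => gF L y (V y) (P y) (Q y)) Ω := by
  have hM : ContDiffOn ℝ (⊤ : ℕ∞) (fun y => D2 L (y, V y)) Ω :=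
    (hD2On hL).comp (contDiffOn_id.prodMk hV.1) (fun y hy => hV.2 y hy)
  have h2 : ContDiffOn ℝ (⊤ : ℕ∞)
      (fun y => D2 L (y, V y) ((0:Vec n), P y) ((0:Vec n), Q y)) Ω :=
    (hM.clm_apply (contDiffOn_const.prodMk hP)).clm_apply (contDiffOn_const.prodMk hQ)
  refine ContDiffOn.congr ((contDiffOn_const (c := (1/2:ℝ))).mul h2) ?_
  intro y hy
  exact gF_eq_D2 hL (hV.2 y hy) (P y) (Q y)

lemma CV_contDiffOn (hL : IsPseudoFinsler Ω A L) (hV : LAdmissible A Ω V)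
    {P Q R : Vec n → Vec n} (hP : ContDiffOn ℝ (⊤ : ℕ∞) P Ω) (hQ : ContDiffOn ℝ (⊤ : ℕ∞) Q Ω)
    (hR : ContDiffOn ℝ (⊤ : ℕ∞) R Ω) :
    ContDiffOn ℝ (⊤ : ℕ∞) (fun y => CartanF L y (V y) (P y) (Q y) (R y)) Ω := by
  have hM : ContDiffOn ℝ (⊤ : ℕ∞) (fun y => D3 L (y, V y)) Ω :=
    (hD3On hL).comp (contDiffOn_id.prodMk hV.1) (fun y hy => hV.2 y hy)
  have h3 : ContDiffOn ℝ (⊤ : ℕ∞)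
      (fun y => D3 L (y, V y) ((0:Vec n), P y) ((0:Vec n), Q y) ((0:Vec n), R y)) Ω :=
    ((hM.clm_apply (contDiffOn_const.prodMk hP)).clm_apply
      (contDiffOn_const.prodMk hQ)).clm_apply (contDiffOn_const.prodMk hR)
  refine ContDiffOn.congr ((contDiffOn_const (c := (1/4:ℝ))).mul h3) ?_
  intro y hy
  exact CartanF_eq_D3 hL (hV.2 y hy) (P y) (Q y) (R y)

lemma fderiv_apply_contDiffOn {F : Type*} [NormedAddCommGroup F] [NormedSpace ℝ F]
    (hΩ : IsOpen Ω) {f : Vec n → F} {P : Vec n → Vec n}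
    (hf : ContDiffOn ℝ (⊤ : ℕ∞) f Ω) (hP : ContDiffOn ℝ (⊤ : ℕ∞) P Ω) :
    ContDiffOn ℝ (⊤ : ℕ∞) (fun y => fderiv ℝ f y (P y)) Ω :=
  (hf.fderiv_of_isOpen hΩ (by simp)).clm_apply hP

end Smoothness

section GammaSmooth
open Matrix

variable {n : ℕ} {Ω : Set (Vec n)} {A : Set (Vec n × Vec n)} {L : Vec n × Vec n → ℝ}
variable {V : Vec n → Vec n} {Γ : Vec n → Bil n}

open Matrix in
lemma det_contDiffOn {m : ℕ} {s : Set (Vec n)} {M : Vec n → Matrix (Fin m) (Fin m) ℝ}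
    (h : ∀ i j, ContDiffOn ℝ (⊤ : ℕ∞) (fun y => M y i j) s) :
    ContDiffOn ℝ (⊤ : ℕ∞) (fun y => (M y).det) s := by
  simp_rw [Matrix.det_apply']
  apply ContDiffOn.sum
  intro σ _
  exact (contDiffOn_const (c := (Equiv.Perm.sign σ : ℝ))).mul
    (contDiffOn_prod (fun i _ => h (σ i) i))

lemma vec_expand (v : Vec n) : v = ∑ i : Fin n, v i • (Pi.single i 1 : Vec n) := by
  have h := Finset.univ_sum_single v
  rw [← h]
  congr 1
  funext i
  funext j
  by_cases hj : j = i
  · subst hj; simp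
  · simp [Pi.single_eq_of_ne hj]

lemma gF_basis_expand (hL : IsPseudoFinsler Ω A L) {p : Vec n × Vec n} (hp : p ∈ A)
    (a w : Vec n) :
    gF L p.1 p.2 a w = ∑ k : Fin n, w k * gF L p.1 p.2 a (Pi.single k 1) := by
  conv_lhs => rw [vec_expand w]
  rw [gF_sum_right hL hp]
  congr 1
  funext k
  rw [gF_smul_right hL hp]

lemma solve_smooth (hL : IsPseudoFinsler Ω A L) (hV : LAdmissible A Ω V)
    {w : Vec n → Vec n} {c : Fin n → Vec n → ℝ}
    (hc : ∀ j, ContDiffOn ℝ (⊤ : ℕ∞) (c j) Ω)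
    (hw : ∀ y ∈ Ω, ∀ j, gF L y (V y) (Pi.single j 1) (w y) = c j y) :
    ContDiffOn ℝ (⊤ : ℕ∞) w Ω := by
  classical
  set G : Vec n → Matrix (Fin n) (Fin n) ℝ :=
    fun y => Matrix.of fun i j => gF L y (V y) (Pi.single i 1) (Pi.single j 1) with hGdef
  have hpA : ∀ y ∈ Ω, (y, V y) ∈ A := hV.2
  have hGsm : ∀ i j, ContDiffOn ℝ (⊤ : ℕ∞) (fun y => G y i j) Ω := fun i j =>
    gV_contDiffOn hL hV contDiffOn_const contDiffOn_const
  have hGmul : ∀ y ∈ Ω, ∀ (v : Vec n) (j : Fin n),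
      (G y *ᵥ v) j = gF L y (V y) (Pi.single j 1) v := by
    intro y hy v j
    rw [gF_basis_expand hL (hpA y hy) (Pi.single j 1) v]
    simp only [Matrix.mulVec, dotProduct, hGdef, Matrix.of_apply]
    congr 1
    funext k
    ring
  have hmul : ∀ y ∈ Ω, G y *ᵥ w y = fun j => c j y := by
    intro y hy; funext j
    rw [hGmul y hy (w y) j, hw y hy j]
  have hdet : ∀ y ∈ Ω, (G y).det ≠ 0 := by
    intro y hy hdet0
    obtain ⟨v, hvne, hv0⟩ := (Matrix.exists_mulVec_eq_zero_iff).2 hdet0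
    have hgv : ∀ j, gF L y (V y) (Pi.single j 1) v = 0 := by
      intro j
      rw [← hGmul y hy v j, hv0]
      rfl
    have : ∀ w', gF L y (V y) v w' = 0 := by
      intro w'
      rw [gF_basis_expand hL (hpA y hy) v w']
      apply Finset.sum_eq_zero
      intro k _
      rw [hL.g_symm (y, V y) (hpA y hy) v (Pi.single k 1), hgv k, mul_zero]
    exact hvne (hL.g_nondeg (y, V y) (hpA y hy) v this)
  have hkey : ∀ y ∈ Ω, w y = ((G y).det)⁻¹ • ((G y).adjugate *ᵥ (fun j => c j y)) := by
    intro y hy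
    have h1 : (G y).adjugate *ᵥ (G y *ᵥ w y) = (G y).det • w y := by
      rw [Matrix.mulVec_mulVec, Matrix.adjugate_mul, Matrix.smul_mulVec,
        Matrix.one_mulVec]
    rw [hmul y hy] at h1
    rw [h1, smul_smul, inv_mul_cancel₀ (hdet y hy), one_smul]
  have hdetsm : ContDiffOn ℝ (⊤ : ℕ∞) (fun y => (G y).det) Ω := det_contDiffOn hGsm
  have hadj : ∀ i j, ContDiffOn ℝ (⊤ : ℕ∞) (fun y => (G y).adjugate i j) Ω := by
    intro i j
    have heq : (fun y => (G y).adjugate i j)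
        = fun y => ((G y).updateRow j (Pi.single i 1)).det := by
      funext y; exact Matrix.adjugate_apply (G y) i j
    rw [heq]
    apply det_contDiffOn
    intro a b
    by_cases hab : a = j
    · subst hab
      have : (fun y => (G y).updateRow a (Pi.single i 1) a b)
          = fun _ : Vec n => (Pi.single i 1 : Fin n → ℝ) b := by
        funext y; rw [Matrix.updateRow_self]
      rw [this]; exact contDiffOn_const
    · have : (fun y => (G y).updateRow j (Pi.single i 1) a b) = fun y => G y a b := by
        funext y; rw [Matrix.updateRow_apply, if_neg hab]
      rw [this]; exact hGsm a b
  have hsm : ContDiffOn ℝ (⊤ : ℕ∞)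
      (fun y => ((G y).det)⁻¹ • ((G y).adjugate *ᵥ (fun j => c j y))) Ω := by
    apply contDiffOn_pi.2; intro i
    have heq : (fun y => (((G y).det)⁻¹ • ((G y).adjugate *ᵥ (fun j => c j y))) i)
        = fun y => ((G y).det)⁻¹ * ∑ j, (G y).adjugate i j * c j y := by
      funext y; simp [Matrix.mulVec, dotProduct]
    rw [heq]
    exact (hdetsm.inv hdet).mul (ContDiffOn.sum (fun j _ => (hadj i j).mul (hc j)))
  exact ContDiffOn.congr hsm hkey

end GammaSmooth

section Koszul
open Matrix

variable {n : ℕ} {Ω : Set (Vec n)} {A : Set (Vec n × Vec n)} {L : Vec n × Vec n → ℝ}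
variable {V : Vec n → Vec n} {Γ : Vec n → Bil n}

lemma nabla_const_const (Γ : Vec n → Bil n) (u a y : Vec n) :
    nablaVF Γ (fun _ => u) (fun _ => a) y = Γ y u a := by
  simp [nablaVF]

lemma nabla_V_const (Γ : Vec n → Bil n) (V : Vec n → Vec n) (a y : Vec n) :
    nablaVF Γ V (fun _ => a) y = Γ y (V y) a := by
  simp [nablaVF]

lemma nabla_const_V (Γ : Vec n → Bil n) (V : Vec n → Vec n) (u y : Vec n) :
    nablaVF Γ (fun _ => u) V y = fderiv ℝ V y u + Γ y u (V y) := rfl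

lemma Gamma_const_V_eq (Γ : Vec n → Bil n) (V : Vec n → Vec n) (u y : Vec n) :
    Γ y u (V y) = nablaVF Γ (fun _ => u) V y - fderiv ℝ V y u := by
  rw [nabla_const_V]; abel

lemma omega_smooth (hL : IsPseudoFinsler Ω A L) (hV : LAdmissible A Ω V)
    (hTF : TorsionFree Ω Γ) (hAC : AlmostGCompatible L Ω Γ V) :
    ContDiffOn ℝ (⊤ : ℕ∞) (fun y => nablaVF Γ V V y) Ω := by
  have hΩ := hL.isOpen_base
  apply solve_smooth hL hV (c := fun j y =>
    fderiv ℝ (fun y' => gF L y' (V y') (Pi.single j 1) (V y')) y (V y)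
    - (1/2) * fderiv ℝ (fun y' => gF L y' (V y') (V y') (V y')) y (Pi.single j 1)
    + gF L y (V y) (fderiv ℝ V y (Pi.single j 1)) (V y))
  · intro j
    apply ContDiffOn.add
    apply ContDiffOn.sub
    · exact fderiv_apply_contDiffOn hΩ (gV_contDiffOn hL hV contDiffOn_const hV.1) hV.1
    · exact (contDiffOn_const (c := (1/2:ℝ))).mul
        (fderiv_apply_contDiffOn hΩ (gV_contDiffOn hL hV hV.1 hV.1) contDiffOn_const)
    · exact gV_contDiffOn hL hV (fderiv_apply_contDiffOn hΩ hV.1 contDiffOn_const) hV.1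
  · intro y hy j
    have hp : (y, V y) ∈ A := hV.2 y hy
    set a : Vec n := Pi.single j 1 with ha
    have h1 := hAC V (fun _ => a) V hV.1 contDiffOn_const hV.1 y hy
    have h2 := hAC (fun _ => a) V V contDiffOn_const hV.1 hV.1 y hy
    rw [nabla_V_const, hTF y hy (V y) a, Gamma_const_V_eq,
      gF_sub_left hL hp, CartanF_euler3 hL hp] at h1
    rw [CartanF_euler2 hL hp,
      hL.g_symm (y, V y) hp (V y) (nablaVF Γ (fun _ => a) V y)] at h2
    linarith [h1, h2]

lemma Wc_smooth (hL : IsPseudoFinsler Ω A L) (hV : LAdmissible A Ω V)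
    (hTF : TorsionFree Ω Γ) (hAC : AlmostGCompatible L Ω Γ V) (u : Vec n) :
    ContDiffOn ℝ (⊤ : ℕ∞) (fun y => nablaVF Γ (fun _ => u) V y) Ω := by
  have hΩ := hL.isOpen_base
  have hω := omega_smooth hL hV hTF hAC
  apply solve_smooth hL hV (c := fun j y =>
      fderiv ℝ (fun y' => gF L y' (V y') (Pi.single j 1) (V y')) y u
      - (1/2) * (fderiv ℝ (fun y' => gF L y' (V y') (Pi.single j 1) (V y')) y u
        + fderiv ℝ (fun y' => gF L y' (V y') u (V y')) y (Pi.single j 1)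
        - fderiv ℝ (fun y' => gF L y' (V y') u (Pi.single j 1)) y (V y))
      + (1/2) * gF L y (V y) (fderiv ℝ V y u) (Pi.single j 1)
      + (1/2) * gF L y (V y) u (fderiv ℝ V y (Pi.single j 1))
      - CartanF L y (V y) (nablaVF Γ V V y) u (Pi.single j 1))
  · intro j
    apply ContDiffOn.sub
    apply ContDiffOn.add
    apply ContDiffOn.add
    apply ContDiffOn.sub
    · exact fderiv_apply_contDiffOn hΩ (gV_contDiffOn hL hV contDiffOn_const hV.1)
        contDiffOn_const
    · refine (contDiffOn_const (c := (1/2:ℝ))).mul ?_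
      apply ContDiffOn.sub
      apply ContDiffOn.add
      · exact fderiv_apply_contDiffOn hΩ (gV_contDiffOn hL hV contDiffOn_const hV.1)
          contDiffOn_const
      · exact fderiv_apply_contDiffOn hΩ (gV_contDiffOn hL hV contDiffOn_const hV.1)
          contDiffOn_const
      · exact fderiv_apply_contDiffOn hΩ (gV_contDiffOn hL hV contDiffOn_const
          contDiffOn_const) hV.1
    · exact (contDiffOn_const (c := (1/2:ℝ))).mul
        (gV_contDiffOn hL hV (fderiv_apply_contDiffOn hΩ hV.1 contDiffOn_const)
          contDiffOn_const)
    · exact (contDiffOn_const (c := (1/2:ℝ))).mul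
        (gV_contDiffOn hL hV contDiffOn_const
          (fderiv_apply_contDiffOn hΩ hV.1 contDiffOn_const))
    · exact CV_contDiffOn hL hV hω contDiffOn_const contDiffOn_const
  · intro y hy j
    have hp : (y, V y) ∈ A := hV.2 y hy
    set a : Vec n := Pi.single j 1 with ha
    have h3 := hAC (fun _ => u) (fun _ => a) V contDiffOn_const contDiffOn_const hV.1 y hy
    have h4 := hAC (fun _ => a) (fun _ => u) V contDiffOn_const contDiffOn_const hV.1 y hy
    have h5 := hAC V (fun _ => u) (fun _ => a) hV.1 contDiffOn_const contDiffOn_const y hy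
    rw [nabla_const_const, CartanF_euler3 hL hp] at h3
    rw [nabla_const_const, hTF y hy a u, CartanF_euler3 hL hp] at h4
    rw [nabla_V_const, nabla_V_const, hTF y hy (V y) u, hTF y hy (V y) a,
      Gamma_const_V_eq, Gamma_const_V_eq, gF_sub_left hL hp, gF_sub_right hL hp] at h5
    have hsym1 : gF L y (V y) (nablaVF Γ (fun _ => u) V y) a
        = gF L y (V y) a (nablaVF Γ (fun _ => u) V y) :=
      hL.g_symm (y, V y) hp _ _
    have hsym2 : gF L y (V y) (fderiv ℝ V y u) a
        = gF L y (V y) a (fderiv ℝ V y u) := hL.g_symm (y, V y) hp _ _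
    linarith [h3, h4, h5, hsym1, hsym2]

lemma Gamma_comp_smooth (hL : IsPseudoFinsler Ω A L) (hV : LAdmissible A Ω V)
    (hTF : TorsionFree Ω Γ) (hAC : AlmostGCompatible L Ω Γ V) (u a : Vec n) :
    ContDiffOn ℝ (⊤ : ℕ∞) (fun y => Γ y u a) Ω := by
  have hΩ := hL.isOpen_base
  apply solve_smooth hL hV (c := fun j y =>
    (1/2) * (fderiv ℝ (fun y' => gF L y' (V y') a (Pi.single j 1)) y u
      + fderiv ℝ (fun y' => gF L y' (V y') u (Pi.single j 1)) y a
      - fderiv ℝ (fun y' => gF L y' (V y') u a) y (Pi.single j 1))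
    - CartanF L y (V y) (nablaVF Γ (fun _ => u) V y) a (Pi.single j 1)
    - CartanF L y (V y) (nablaVF Γ (fun _ => a) V y) u (Pi.single j 1)
    + CartanF L y (V y) (nablaVF Γ (fun _ => Pi.single j 1) V y) u a)
  · intro j
    apply ContDiffOn.add
    apply ContDiffOn.sub
    apply ContDiffOn.sub
    · refine (contDiffOn_const (c := (1/2:ℝ))).mul ?_
      apply ContDiffOn.sub
      apply ContDiffOn.add
      · exact fderiv_apply_contDiffOn hΩ (gV_contDiffOn hL hV contDiffOn_const
          contDiffOn_const) contDiffOn_const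
      · exact fderiv_apply_contDiffOn hΩ (gV_contDiffOn hL hV contDiffOn_const
          contDiffOn_const) contDiffOn_const
      · exact fderiv_apply_contDiffOn hΩ (gV_contDiffOn hL hV contDiffOn_const
          contDiffOn_const) contDiffOn_const
    · exact CV_contDiffOn hL hV (Wc_smooth hL hV hTF hAC u) contDiffOn_const
        contDiffOn_const
    · exact CV_contDiffOn hL hV (Wc_smooth hL hV hTF hAC a) contDiffOn_const
        contDiffOn_const
    · exact CV_contDiffOn hL hV (Wc_smooth hL hV hTF hAC (Pi.single j 1)) contDiffOn_const
        contDiffOn_const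
  · intro y hy j
    have hp : (y, V y) ∈ A := hV.2 y hy
    set b : Vec n := Pi.single j 1 with hb
    have h6 := hAC (fun _ => u) (fun _ => a) (fun _ => b) contDiffOn_const contDiffOn_const
      contDiffOn_const y hy
    have h7 := hAC (fun _ => a) (fun _ => u) (fun _ => b) contDiffOn_const contDiffOn_const
      contDiffOn_const y hy
    have h8 := hAC (fun _ => b) (fun _ => u) (fun _ => a) contDiffOn_const contDiffOn_const
      contDiffOn_const y hy
    rw [nabla_const_const, nabla_const_const] at h6 h7 h8
    rw [hTF y hy a u] at h7
    rw [hTF y hy b u, hTF y hy b a] at h8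
    have hs1 : gF L y (V y) a (Γ y u b) = gF L y (V y) (Γ y u b) a :=
      hL.g_symm (y, V y) hp _ _
    have hs2 : gF L y (V y) b (Γ y u a) = gF L y (V y) (Γ y u a) b :=
      hL.g_symm (y, V y) hp _ _
    linarith [h6, h7, h8, hs1, hs2]

lemma Gamma_pair_smooth (hL : IsPseudoFinsler Ω A L) (hV : LAdmissible A Ω V)
    (hTF : TorsionFree Ω Γ) (hAC : AlmostGCompatible L Ω Γ V)
    {P Q : Vec n → Vec n} (hP : ContDiffOn ℝ (⊤ : ℕ∞) P Ω) (hQ : ContDiffOn ℝ (⊤ : ℕ∞) Q Ω) :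
    ContDiffOn ℝ (⊤ : ℕ∞) (fun y => Γ y (P y) (Q y)) Ω := by
  have hexp : ∀ y, Γ y (P y) (Q y)
      = ∑ i : Fin n, ∑ j : Fin n,
          (P y i * Q y j) • Γ y (Pi.single i 1) (Pi.single j 1) := by
    intro y
    conv_lhs => rw [vec_expand (P y), vec_expand (Q y)]
    simp only [map_sum, _root_.map_smul, ContinuousLinearMap.sum_apply,
      ContinuousLinearMap.smul_apply, Finset.smul_sum, smul_smul]
    rw [Finset.sum_comm]
    congr 1; funext i; congr 1; funext k; rw [mul_comm]
  refine ContDiffOn.congr ?_ (fun y _ => hexp y)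
  apply ContDiffOn.sum
  intro i _
  apply ContDiffOn.sum
  intro k _
  exact ((contDiffOn_pi.1 hP i).mul (contDiffOn_pi.1 hQ k)).smul
    (Gamma_comp_smooth hL hV hTF hAC _ _)

lemma nabla_smooth (hL : IsPseudoFinsler Ω A L) (hV : LAdmissible A Ω V)
    (hTF : TorsionFree Ω Γ) (hAC : AlmostGCompatible L Ω Γ V)
    {P Q : Vec n → Vec n} (hP : ContDiffOn ℝ (⊤ : ℕ∞) P Ω) (hQ : ContDiffOn ℝ (⊤ : ℕ∞) Q Ω) :
    ContDiffOn ℝ (⊤ : ℕ∞) (fun y => nablaVF Γ P Q y) Ω := by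
  have h1 : ContDiffOn ℝ (⊤ : ℕ∞) (fun y => fderiv ℝ Q y (P y)) Ω :=
    fderiv_apply_contDiffOn hL.isOpen_base hQ hP
  exact (h1.add (Gamma_pair_smooth hL hV hTF hAC hP hQ)).congr (fun y _ => rfl)

end Koszul

section Bianchi

variable {n : ℕ} {Ω : Set (Vec n)} {A : Set (Vec n × Vec n)} {L : Vec n × Vec n → ℝ}
variable {V : Vec n → Vec n} {Γ : Vec n → Bil n}

/-- gF of zero on the left. -/
lemma gF_zero_left (hL : IsPseudoFinsler Ω A L) {p : Vec n × Vec n} (hp : p ∈ A)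
    (w : Vec n) : gF L p.1 p.2 0 w = 0 := by
  have := gF_sub_left hL hp w w w
  simpa using this

/-- pointwise: `∇_P Q - ∇_Q P = [P,Q]` on `Ω`. -/
lemma nabla_torsion (hTF : TorsionFree Ω Γ) (P Q : Vec n → Vec n) {x : Vec n} (hx : x ∈ Ω) :
    nablaVF Γ P Q x - nablaVF Γ Q P x = lieVF P Q x := by
  simp only [nablaVF, lieVF, hTF x hx (P x) (Q x)]
  abel

/-- differentiability of a smooth field at a point of `Ω` -/
lemma smooth_diffAt (hΩ : IsOpen Ω) {P : Vec n → Vec n} (hP : ContDiffOn ℝ (⊤ : ℕ∞) P Ω)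
    {x : Vec n} (hx : x ∈ Ω) : DifferentiableAt ℝ P x :=
  ((hP x hx).contDiffAt (hΩ.mem_nhds hx)).differentiableAt (n := (⊤ : ℕ∞)) (by simp)

lemma nabla_lie_second (hL : IsPseudoFinsler Ω A L) (hV : LAdmissible A Ω V)
    (hTF : TorsionFree Ω Γ) (hAC : AlmostGCompatible L Ω Γ V)
    {X Y Z : Vec n → Vec n} (hX : ContDiffOn ℝ (⊤ : ℕ∞) X Ω) (hY : ContDiffOn ℝ (⊤ : ℕ∞) Y Ω)
    (hZ : ContDiffOn ℝ (⊤ : ℕ∞) Z Ω) {x : Vec n} (hx : x ∈ Ω) :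
    nablaVF Γ X (nablaVF Γ Y Z) x - nablaVF Γ X (nablaVF Γ Z Y) x
      = nablaVF Γ X (lieVF Y Z) x := by
  have hΩ := hL.isOpen_base
  have hPQ : ∀ y ∈ Ω, nablaVF Γ Y Z y - nablaVF Γ Z Y y = lieVF Y Z y :=
    fun y hy => nabla_torsion hTF Y Z hy
  have hdP : DifferentiableAt ℝ (nablaVF Γ Y Z) x :=
    smooth_diffAt hΩ (nabla_smooth hL hV hTF hAC hY hZ) hx
  have hdQ : DifferentiableAt ℝ (nablaVF Γ Z Y) x :=
    smooth_diffAt hΩ (nabla_smooth hL hV hTF hAC hZ hY) hx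
  have hev : lieVF Y Z =ᶠ[𝓝 x] fun y => nablaVF Γ Y Z y - nablaVF Γ Z Y y := by
    filter_upwards [hΩ.mem_nhds hx] with y hy
    exact (hPQ y hy).symm
  have hfd : fderiv ℝ (lieVF Y Z) x
      = fderiv ℝ (nablaVF Γ Y Z) x - fderiv ℝ (nablaVF Γ Z Y) x := by
    rw [hev.fderiv_eq, fderiv_fun_sub hdP hdQ]
  have harg : lieVF Y Z x = nablaVF Γ Y Z x - nablaVF Γ Z Y x := (hPQ x hx).symm
  have hgoal : nablaVF Γ X (lieVF Y Z) x
      = (fderiv ℝ (nablaVF Γ Y Z) x - fderiv ℝ (nablaVF Γ Z Y) x) (X x)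
        + Γ x (X x) (nablaVF Γ Y Z x - nablaVF Γ Z Y x) := by
    rw [show nablaVF Γ X (lieVF Y Z) x
      = fderiv ℝ (lieVF Y Z) x (X x) + Γ x (X x) (lieVF Y Z x) from rfl, hfd, harg]
  rw [hgoal, (Γ x (X x)).map_sub]
  simp only [ContinuousLinearMap.sub_apply]
  rw [show nablaVF Γ X (nablaVF Γ Y Z) x
      = fderiv ℝ (nablaVF Γ Y Z) x (X x) + Γ x (X x) (nablaVF Γ Y Z x) from rfl,
    show nablaVF Γ X (nablaVF Γ Z Y) x
      = fderiv ℝ (nablaVF Γ Z Y) x (X x) + Γ x (X x) (nablaVF Γ Z Y x) from rfl]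
  abel

/-- expansion of an iterated Lie bracket at a point of `Ω`. -/
lemma lie_lie_expand (hΩ : IsOpen Ω) {X Y Z : Vec n → Vec n}
    (hX : ContDiffOn ℝ (⊤ : ℕ∞) X Ω) (hY : ContDiffOn ℝ (⊤ : ℕ∞) Y Ω) (hZ : ContDiffOn ℝ (⊤ : ℕ∞) Z Ω)
    {x : Vec n} (hx : x ∈ Ω) :
    lieVF X (lieVF Y Z) x
      = (fderiv ℝ (fderiv ℝ Z) x (X x)) (Y x) + fderiv ℝ Z x (fderiv ℝ Y x (X x))
        - (fderiv ℝ (fderiv ℝ Y) x (X x)) (Z x) - fderiv ℝ Y x (fderiv ℝ Z x (X x))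
        - fderiv ℝ X x (fderiv ℝ Z x (Y x)) + fderiv ℝ X x (fderiv ℝ Y x (Z x)) := by
  have hcX : ContDiffAt ℝ (⊤ : ℕ∞) X x := (hX x hx).contDiffAt (hΩ.mem_nhds hx)
  have hcY : ContDiffAt ℝ (⊤ : ℕ∞) Y x := (hY x hx).contDiffAt (hΩ.mem_nhds hx)
  have hcZ : ContDiffAt ℝ (⊤ : ℕ∞) Z x := (hZ x hx).contDiffAt (hΩ.mem_nhds hx)
  have hdY : DifferentiableAt ℝ Y x := hcY.differentiableAt (n := (⊤ : ℕ∞)) (by simp)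
  have hdZ : DifferentiableAt ℝ Z x := hcZ.differentiableAt (n := (⊤ : ℕ∞)) (by simp)
  have hdX : DifferentiableAt ℝ X x := hcX.differentiableAt (n := (⊤ : ℕ∞)) (by simp)
  have hd2Y : DifferentiableAt ℝ (fderiv ℝ Y) x :=
    (hcY.fderiv_right (by simp)).differentiableAt (n := (⊤ : ℕ∞)) (by simp)
  have hd2Z : DifferentiableAt ℝ (fderiv ℝ Z) x :=
    (hcZ.fderiv_right (by simp)).differentiableAt (n := (⊤ : ℕ∞)) (by simp)
  have hda : DifferentiableAt ℝ (fun y => fderiv ℝ Z y (Y y)) x := hd2Z.clm_apply hdY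
  have hdb : DifferentiableAt ℝ (fun y => fderiv ℝ Y y (Z y)) x := hd2Y.clm_apply hdZ
  have hlie : lieVF Y Z = fun y => fderiv ℝ Z y (Y y) - fderiv ℝ Y y (Z y) := rfl
  have h1 : fderiv ℝ (lieVF Y Z) x
      = fderiv ℝ (fun y => fderiv ℝ Z y (Y y)) x - fderiv ℝ (fun y => fderiv ℝ Y y (Z y)) x := by
    rw [hlie, fderiv_fun_sub hda hdb]
  have h2 : fderiv ℝ (fun y => fderiv ℝ Z y (Y y)) x
      = (fderiv ℝ Z x).comp (fderiv ℝ Y x) + (fderiv ℝ (fderiv ℝ Z) x).flip (Y x) :=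
    fderiv_clm_apply hd2Z hdY
  have h3 : fderiv ℝ (fun y => fderiv ℝ Y y (Z y)) x
      = (fderiv ℝ Y x).comp (fderiv ℝ Z x) + (fderiv ℝ (fderiv ℝ Y) x).flip (Z x) :=
    fderiv_clm_apply hd2Y hdZ
  have h4 : lieVF X (lieVF Y Z) x
      = fderiv ℝ (lieVF Y Z) x (X x) - fderiv ℝ X x (lieVF Y Z x) := rfl
  rw [h4, h1, h2, h3]
  have h5 : lieVF Y Z x = fderiv ℝ Z x (Y x) - fderiv ℝ Y x (Z x) := rfl
  rw [h5, (fderiv ℝ X x).map_sub]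
  simp only [ContinuousLinearMap.sub_apply, ContinuousLinearMap.add_apply,
    ContinuousLinearMap.flip_apply, ContinuousLinearMap.comp_apply]
  abel

/-- Jacobi identity at points of `Ω`. -/
lemma jacobi (hΩ : IsOpen Ω) {X Y Z : Vec n → Vec n}
    (hX : ContDiffOn ℝ (⊤ : ℕ∞) X Ω) (hY : ContDiffOn ℝ (⊤ : ℕ∞) Y Ω) (hZ : ContDiffOn ℝ (⊤ : ℕ∞) Z Ω)
    {x : Vec n} (hx : x ∈ Ω) :
    lieVF X (lieVF Y Z) x + lieVF Y (lieVF Z X) x + lieVF Z (lieVF X Y) x = 0 := by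
  have e1 := lie_lie_expand hΩ hX hY hZ hx
  have e2 := lie_lie_expand hΩ hY hZ hX hx
  have e3 := lie_lie_expand hΩ hZ hX hY hx
  have sX : ∀ v w, fderiv ℝ (fderiv ℝ X) x v w = fderiv ℝ (fderiv ℝ X) x w v :=
    ((hX x hx).contDiffAt (hΩ.mem_nhds hx)).isSymmSndFDerivAt (by rw [minSmoothness_of_isRCLikeNormedField]; exact WithTop.coe_le_coe.mpr le_top)
  have sY : ∀ v w, fderiv ℝ (fderiv ℝ Y) x v w = fderiv ℝ (fderiv ℝ Y) x w v :=
    ((hY x hx).contDiffAt (hΩ.mem_nhds hx)).isSymmSndFDerivAt (by rw [minSmoothness_of_isRCLikeNormedField]; exact WithTop.coe_le_coe.mpr le_top)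
  have sZ : ∀ v w, fderiv ℝ (fderiv ℝ Z) x v w = fderiv ℝ (fderiv ℝ Z) x w v :=
    ((hZ x hx).contDiffAt (hΩ.mem_nhds hx)).isSymmSndFDerivAt (by rw [minSmoothness_of_isRCLikeNormedField]; exact WithTop.coe_le_coe.mpr le_top)
  rw [e1, e2, e3, sX (Y x) (Z x), sY (X x) (Z x), sZ (X x) (Y x)]
  abel

/-- curvature is antisymmetric in the first two arguments (pointwise, everywhere). -/
lemma curv_antisym (Γ : Vec n → Bil n) (X Y Z : Vec n → Vec n) (x : Vec n) :
    curvVF Γ X Y Z x + curvVF Γ Y X Z x = 0 := by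
  have hlie : lieVF Y X x = -lieVF X Y x := by
    simp only [lieVF]; abel
  simp only [curvVF, nablaVF, hlie]
  simp only [map_neg, ContinuousLinearMap.neg_apply]
  abel

lemma bianchi (hL : IsPseudoFinsler Ω A L) (hV : LAdmissible A Ω V)
    (hTF : TorsionFree Ω Γ) (hAC : AlmostGCompatible L Ω Γ V)
    {X Y Z : Vec n → Vec n} (hX : ContDiffOn ℝ (⊤ : ℕ∞) X Ω) (hY : ContDiffOn ℝ (⊤ : ℕ∞) Y Ω)
    (hZ : ContDiffOn ℝ (⊤ : ℕ∞) Z Ω) {x : Vec n} (hx : x ∈ Ω) :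
    curvVF Γ X Y Z x + curvVF Γ Y Z X x + curvVF Γ Z X Y x = 0 := by
  have ha1 := nabla_lie_second hL hV hTF hAC hX hY hZ hx
  have ha2 := nabla_lie_second hL hV hTF hAC hY hZ hX hx
  have ha3 := nabla_lie_second hL hV hTF hAC hZ hX hY hx
  have hb1 := nabla_torsion hTF X (lieVF Y Z) hx
  have hb2 := nabla_torsion hTF Y (lieVF Z X) hx
  have hb3 := nabla_torsion hTF Z (lieVF X Y) hx
  have hc := jacobi hL.isOpen_base hX hY hZ hx
  simp only [curvVF]
  linear_combination (norm := module) ha1 + ha2 + ha3 + hb1 + hb2 + hb3 + hc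

end Bianchi

section TwoB

variable {n : ℕ} {Ω : Set (Vec n)} {A : Set (Vec n × Vec n)} {L : Vec n × Vec n → ℝ}
variable {V : Vec n → Vec n} {Γ : Vec n → Bil n}

lemma lie_smooth (hΩ : IsOpen Ω) {X Y : Vec n → Vec n}
    (hX : ContDiffOn ℝ (⊤ : ℕ∞) X Ω) (hY : ContDiffOn ℝ (⊤ : ℕ∞) Y Ω) :
    ContDiffOn ℝ (⊤ : ℕ∞) (lieVF X Y) Ω :=
  ((fderiv_apply_contDiffOn hΩ hY hX).sub (fderiv_apply_contDiffOn hΩ hX hY)).congr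
    (fun y _ => rfl)

lemma smooth_diffAt' {F : Type*} [NormedAddCommGroup F] [NormedSpace ℝ F]
    (hΩ : IsOpen Ω) {f : Vec n → F} (hf : ContDiffOn ℝ (⊤ : ℕ∞) f Ω)
    {x : Vec n} (hx : x ∈ Ω) : DifferentiableAt ℝ f x :=
  ((hf x hx).contDiffAt (hΩ.mem_nhds hx)).differentiableAt (n := (⊤ : ℕ∞)) (by simp)

lemma two_B (hL : IsPseudoFinsler Ω A L) (hV : LAdmissible A Ω V)
    (hTF : TorsionFree Ω Γ) (hAC : AlmostGCompatible L Ω Γ V)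
    {X Y Z W : Vec n → Vec n} (hX : ContDiffOn ℝ (⊤ : ℕ∞) X Ω) (hY : ContDiffOn ℝ (⊤ : ℕ∞) Y Ω)
    (hZ : ContDiffOn ℝ (⊤ : ℕ∞) Z Ω) (hW : ContDiffOn ℝ (⊤ : ℕ∞) W Ω) {x : Vec n} (hx : x ∈ Ω) :
    gF L x (V x) (curvVF Γ X Y Z x) (W x) + gF L x (V x) (curvVF Γ X Y W x) (Z x)
      = 2 * BTensor L Γ V X Y Z W x := by
  have hΩ := hL.isOpen_base
  have hp : (x, V x) ∈ A := hV.2 x hx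
  set f : Vec n → ℝ := fun y => gF L y (V y) (Z y) (W y) with hfdef
  have hfsm : ContDiffOn ℝ (⊤ : ℕ∞) f Ω := gV_contDiffOn hL hV hZ hW
  have hfx : ContDiffAt ℝ (⊤ : ℕ∞) f x := (hfsm x hx).contDiffAt (hΩ.mem_nhds hx)
  have hdf : DifferentiableAt ℝ f x := hfx.differentiableAt (n := (⊤ : ℕ∞)) (by simp)
  have hd2f : DifferentiableAt ℝ (fderiv ℝ f) x :=
    (hfx.fderiv_right (by simp)).differentiableAt (n := (⊤ : ℕ∞)) (by simp)
  have hdX : DifferentiableAt ℝ X x := smooth_diffAt hΩ hX hx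
  have hdY : DifferentiableAt ℝ Y x := smooth_diffAt hΩ hY hx
  -- smooth composite fields
  have hnYZ := nabla_smooth hL hV hTF hAC hY hZ
  have hnYW := nabla_smooth hL hV hTF hAC hY hW
  have hnYV := nabla_smooth hL hV hTF hAC hY hV.1
  have hnXZ := nabla_smooth hL hV hTF hAC hX hZ
  have hnXW := nabla_smooth hL hV hTF hAC hX hW
  have hnXV := nabla_smooth hL hV hTF hAC hX hV.1
  have hlie : ContDiffOn ℝ (⊤ : ℕ∞) (lieVF X Y) Ω := lie_smooth hΩ hX hY
  -- first-order compatibility, as functions on Ω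
  set P1 : Vec n → ℝ := fun y => gF L y (V y) (nablaVF Γ Y Z y) (W y) with hP1def
  set P2 : Vec n → ℝ := fun y => gF L y (V y) (Z y) (nablaVF Γ Y W y) with hP2def
  set P3 : Vec n → ℝ := fun y => CartanF L y (V y) (nablaVF Γ Y V y) (Z y) (W y) with hP3def
  set Q1 : Vec n → ℝ := fun y => gF L y (V y) (nablaVF Γ X Z y) (W y) with hQ1def
  set Q2 : Vec n → ℝ := fun y => gF L y (V y) (Z y) (nablaVF Γ X W y) with hQ2def
  set Q3 : Vec n → ℝ := fun y => CartanF L y (V y) (nablaVF Γ X V y) (Z y) (W y) with hQ3def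
  have hevP : (fun y => fderiv ℝ f y (Y y)) =ᶠ[𝓝 x]
      (fun y => P1 y + P2 y + 2 * P3 y) := by
    filter_upwards [hΩ.mem_nhds hx] with y hy
    exact hAC Y Z W hY hZ hW y hy
  have hevQ : (fun y => fderiv ℝ f y (X y)) =ᶠ[𝓝 x]
      (fun y => Q1 y + Q2 y + 2 * Q3 y) := by
    filter_upwards [hΩ.mem_nhds hx] with y hy
    exact hAC X Z W hX hZ hW y hy
  -- differentiability of the pieces
  have hdP1 : DifferentiableAt ℝ P1 x :=
    smooth_diffAt' hΩ (gV_contDiffOn hL hV hnYZ hW) hx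
  have hdP2 : DifferentiableAt ℝ P2 x :=
    smooth_diffAt' hΩ (gV_contDiffOn hL hV hZ hnYW) hx
  have hdP3 : DifferentiableAt ℝ P3 x :=
    smooth_diffAt' hΩ (CV_contDiffOn hL hV hnYV hZ hW) hx
  have hdQ1 : DifferentiableAt ℝ Q1 x :=
    smooth_diffAt' hΩ (gV_contDiffOn hL hV hnXZ hW) hx
  have hdQ2 : DifferentiableAt ℝ Q2 x :=
    smooth_diffAt' hΩ (gV_contDiffOn hL hV hZ hnXW) hx
  have hdQ3 : DifferentiableAt ℝ Q3 x :=
    smooth_diffAt' hΩ (CV_contDiffOn hL hV hnXV hZ hW) hx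
  -- split the derivative of the sums
  have hsplitP : fderiv ℝ (fun y => P1 y + P2 y + 2 * P3 y) x (X x)
      = fderiv ℝ P1 x (X x) + fderiv ℝ P2 x (X x) + 2 * fderiv ℝ P3 x (X x) := by
    rw [((hdP1.hasFDerivAt.fun_add hdP2.hasFDerivAt).fun_add (hdP3.hasFDerivAt.const_mul 2)).fderiv]
    simp [ContinuousLinearMap.add_apply, ContinuousLinearMap.smul_apply, smul_eq_mul]
  have hsplitQ : fderiv ℝ (fun y => Q1 y + Q2 y + 2 * Q3 y) x (Y x)
      = fderiv ℝ Q1 x (Y x) + fderiv ℝ Q2 x (Y x) + 2 * fderiv ℝ Q3 x (Y x) := by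
    rw [((hdQ1.hasFDerivAt.fun_add hdQ2.hasFDerivAt).fun_add (hdQ3.hasFDerivAt.const_mul 2)).fderiv]
    simp [ContinuousLinearMap.add_apply, ContinuousLinearMap.smul_apply, smul_eq_mul]
  -- second derivatives of f
  have hYfX : fderiv ℝ (fun y => fderiv ℝ f y (Y y)) x (X x)
      = fderiv ℝ f x (fderiv ℝ Y x (X x)) + fderiv ℝ (fderiv ℝ f) x (X x) (Y x) := by
    rw [fderiv_clm_apply hd2f hdY]
    simp [ContinuousLinearMap.add_apply, ContinuousLinearMap.comp_apply,
      ContinuousLinearMap.flip_apply]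
  have hXfY : fderiv ℝ (fun y => fderiv ℝ f y (X y)) x (Y x)
      = fderiv ℝ f x (fderiv ℝ X x (Y x)) + fderiv ℝ (fderiv ℝ f) x (Y x) (X x) := by
    rw [fderiv_clm_apply hd2f hdX]
    simp [ContinuousLinearMap.add_apply, ContinuousLinearMap.comp_apply,
      ContinuousLinearMap.flip_apply]
  have hsymf : fderiv ℝ (fderiv ℝ f) x (X x) (Y x)
      = fderiv ℝ (fderiv ℝ f) x (Y x) (X x) := (hfx.isSymmSndFDerivAt (by rw [minSmoothness_of_isRCLikeNormedField]; exact WithTop.coe_le_coe.mpr le_top)) (X x) (Y x)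
  have hbrarg : fderiv ℝ f x (lieVF X Y x)
      = fderiv ℝ f x (fderiv ℝ Y x (X x)) - fderiv ℝ f x (fderiv ℝ X x (Y x)) := by
    rw [show lieVF X Y x = fderiv ℝ Y x (X x) - fderiv ℝ X x (Y x) from rfl,
      (fderiv ℝ f x).map_sub]
  -- connect: X-derivative of (Y-comp) etc.
  have hc1 : fderiv ℝ (fun y => fderiv ℝ f y (Y y)) x (X x)
      = fderiv ℝ (fun y => P1 y + P2 y + 2 * P3 y) x (X x) := by
    rw [hevP.fderiv_eq]
  have hc2 : fderiv ℝ (fun y => fderiv ℝ f y (X y)) x (Y x)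
      = fderiv ℝ (fun y => Q1 y + Q2 y + 2 * Q3 y) x (Y x) := by
    rw [hevQ.fderiv_eq]
  -- second-level compatibility
  have hP1X := hAC X (nablaVF Γ Y Z) W hX hnYZ hW x hx
  have hP2X := hAC X Z (nablaVF Γ Y W) hX hZ hnYW x hx
  have hQ1Y := hAC Y (nablaVF Γ X Z) W hY hnXZ hW x hx
  have hQ2Y := hAC Y Z (nablaVF Γ X W) hY hZ hnXW x hx
  have hbr := hAC (lieVF X Y) Z W hlie hZ hW x hx
  -- Cartan covariant derivative definitions
  have hNC1 : fderiv ℝ (fun y => CartanF L y (V y) (nablaVF Γ Y V y) (Z y) (W y)) x (X x)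
      = nablaCartan L Γ V X (nablaVF Γ Y V) Z W x
        + CartanF L x (V x) (nablaVF Γ X (nablaVF Γ Y V) x) (Z x) (W x)
        + CartanF L x (V x) (nablaVF Γ Y V x) (nablaVF Γ X Z x) (W x)
        + CartanF L x (V x) (nablaVF Γ Y V x) (Z x) (nablaVF Γ X W x) := by
    simp only [nablaCartan]; ring
  have hNC2 : fderiv ℝ (fun y => CartanF L y (V y) (nablaVF Γ X V y) (Z y) (W y)) x (Y x)
      = nablaCartan L Γ V Y (nablaVF Γ X V) Z W x
        + CartanF L x (V x) (nablaVF Γ Y (nablaVF Γ X V) x) (Z x) (W x)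
        + CartanF L x (V x) (nablaVF Γ X V x) (nablaVF Γ Y Z x) (W x)
        + CartanF L x (V x) (nablaVF Γ X V x) (Z x) (nablaVF Γ Y W x) := by
    simp only [nablaCartan]; ring
  -- folding curvature in g and Cartan
  have hfold1 : gF L x (V x) (curvVF Γ X Y Z x) (W x)
      = gF L x (V x) (nablaVF Γ X (nablaVF Γ Y Z) x) (W x)
        - gF L x (V x) (nablaVF Γ Y (nablaVF Γ X Z) x) (W x)
        - gF L x (V x) (nablaVF Γ (lieVF X Y) Z x) (W x) := by
    rw [show curvVF Γ X Y Z x = nablaVF Γ X (nablaVF Γ Y Z) x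
      - nablaVF Γ Y (nablaVF Γ X Z) x - nablaVF Γ (lieVF X Y) Z x from rfl,
      gF_sub_left hL hp, gF_sub_left hL hp]
  have hfold2 : gF L x (V x) (Z x) (curvVF Γ X Y W x)
      = gF L x (V x) (Z x) (nablaVF Γ X (nablaVF Γ Y W) x)
        - gF L x (V x) (Z x) (nablaVF Γ Y (nablaVF Γ X W) x)
        - gF L x (V x) (Z x) (nablaVF Γ (lieVF X Y) W x) := by
    rw [show curvVF Γ X Y W x = nablaVF Γ X (nablaVF Γ Y W) x
      - nablaVF Γ Y (nablaVF Γ X W) x - nablaVF Γ (lieVF X Y) W x from rfl,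
      gF_sub_right hL hp, gF_sub_right hL hp]
  have hsymW : gF L x (V x) (curvVF Γ X Y W x) (Z x)
      = gF L x (V x) (Z x) (curvVF Γ X Y W x) := hL.g_symm (x, V x) hp _ _
  have hfoldC : CartanF L x (V x) (curvVF Γ X Y V x) (Z x) (W x)
      = CartanF L x (V x) (nablaVF Γ X (nablaVF Γ Y V) x) (Z x) (W x)
        - CartanF L x (V x) (nablaVF Γ Y (nablaVF Γ X V) x) (Z x) (W x)
        - CartanF L x (V x) (nablaVF Γ (lieVF X Y) V x) (Z x) (W x) := by
    rw [show curvVF Γ X Y V x = nablaVF Γ X (nablaVF Γ Y V) x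
      - nablaVF Γ Y (nablaVF Γ X V) x - nablaVF Γ (lieVF X Y) V x from rfl,
      CartanF_sub1 hL hp, CartanF_sub1 hL hp]
  have hanti : CartanF L x (V x) (curvVF Γ Y X V x) (Z x) (W x)
      = - CartanF L x (V x) (curvVF Γ X Y V x) (Z x) (W x) := by
    have h0 := curv_antisym Γ X Y V x
    have : curvVF Γ Y X V x = - curvVF Γ X Y V x := by
      linear_combination (norm := module) h0
    rw [this, ← CartanF_neg1 hL hp]
  -- unfold the B-tensor
  simp only [BTensor]
  linarith [hc1, hc2, hsplitP, hsplitQ, hYfX, hXfY, hsymf, hbrarg, hP1X, hP2X, hQ1Y, hQ2Y,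
    hbr, hNC1, hNC2, hfold1, hfold2, hsymW, hfoldC, hanti]

end TwoB


/-- The six-`B` symmetry
`g_V(R^V(X,Y)Z, W) − g_V(R^V(Z,W)X, Y) = B^V(Z,Y,X,W) + B^V(X,Z,Y,W) + B^V(W,X,Z,Y)
  + B^V(Y,W,Z,X) + B^V(W,Z,X,Y) + B^V(X,Y,Z,W)`. -/
theorem curvature_six_B_identity {n : ℕ} (hn : 1 ≤ n)
    (Ω : Set (Vec n)) (A : Set (Vec n × Vec n)) (L : Vec n × Vec n → ℝ)
    (hL : IsPseudoFinsler Ω A L) (V : Vec n → Vec n) (hV : LAdmissible A Ω V)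
    (Γ : Vec n → Bil n) (hTF : TorsionFree Ω Γ) (hAC : AlmostGCompatible L Ω Γ V) :
    ∀ X Y Z W : Vec n → Vec n,
      ContDiffOn ℝ (⊤ : ℕ∞) X Ω → ContDiffOn ℝ (⊤ : ℕ∞) Y Ω → ContDiffOn ℝ (⊤ : ℕ∞) Z Ω → ContDiffOn ℝ (⊤ : ℕ∞) W Ω →
      ∀ x ∈ Ω,
        gF L x (V x) (curvVF Γ X Y Z x) (W x) - gF L x (V x) (curvVF Γ Z W X x) (Y x) =
          BTensor L Γ V Z Y X W x + BTensor L Γ V X Z Y W x + BTensor L Γ V W X Z Y x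
            + BTensor L Γ V Y W Z X x + BTensor L Γ V W Z X Y x
            + BTensor L Γ V X Y Z W x := by
  intro X Y Z W hX hY hZ hW x hx
  have hp : (x, V x) ∈ A := hV.2 x hx
  have hgadd : ∀ u w t : Vec n,
      gF L x (V x) u t + gF L x (V x) w t = gF L x (V x) (u + w) t :=
    fun u w t => (hL.g_add_left (x, V x) hp u w t).symm
  have hR1 : ∀ P Q R T : Vec n → Vec n,
      gF L x (V x) (curvVF Γ P Q R x) (T x) + gF L x (V x) (curvVF Γ Q P R x) (T x) = 0 := by
    intro P Q R T
    rw [hgadd, curv_antisym Γ P Q R x, gF_zero_left hL hp]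
  have hfold3 : ∀ (a b c : Vec n) (T : Vec n → Vec n), a + b + c = 0 →
      gF L x (V x) a (T x) + gF L x (V x) b (T x) + gF L x (V x) c (T x) = 0 := by
    intro a b c T h0
    rw [hgadd, hgadd, h0, gF_zero_left hL hp]
  have hR3_1 := hfold3 _ _ _ W (bianchi hL hV hTF hAC hX hY hZ hx)
  have hR3_2 := hfold3 _ _ _ X (bianchi hL hV hTF hAC hY hZ hW hx)
  have hR3_3 := hfold3 _ _ _ Y (bianchi hL hV hTF hAC hZ hW hX hx)
  have hR3_4 := hfold3 _ _ _ Z (bianchi hL hV hTF hAC hW hX hY hx)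
  have hB1 := two_B hL hV hTF hAC hZ hY hX hW hx
  have hB2 := two_B hL hV hTF hAC hX hZ hY hW hx
  have hB3 := two_B hL hV hTF hAC hW hX hZ hY hx
  have hB4 := two_B hL hV hTF hAC hY hW hZ hX hx
  have hB5 := two_B hL hV hTF hAC hW hZ hX hY hx
  have hB6 := two_B hL hV hTF hAC hX hY hZ hW hx
  have hA1 := hR1 X Z Y W
  have hA2 := hR1 Y Z X W
  have hA3 := hR1 Y Z W X
  have hA4 := hR1 Y W Z X
  have hA5 := hR1 Z W X Y
  have hA6 := hR1 Z W Y X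
  have hA7 := hR1 X Y Z W
  have hA8 := hR1 X Y W Z
  have hA9 := hR1 W X Z Y
  have hA10 := hR1 W X Y Z
  have hA11 := hR1 Z Y X W
  have hA12 := hR1 W Z X Y
  linarith [hB1, hB2, hB3, hB4, hB5, hB6, hA1, hA2, hA3, hA4, hA5, hA6, hA7, hA8, hA9,
    hA10, hA11, hA12, hR3_1, hR3_2, hR3_3, hR3_4]
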